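/- arXiv:2204.11706 — 2 statements merged into one kernel-verified Lean document; each statement's English description precedes it below -/
import Mathlib

section
/- Suppose along integral curves one has $\frac{dx}{dt} = \tau x + x^2 f_1$ and the unit level set condition $\tau^2 + |\mu|^2 = 1 + O(x)$, where $f_1$ is smooth and bounded. Then $\frac{d}{dt}(x^{-2}) = -2x^{-2}(\tau + x f_1)$ and $\frac{d^2}{dt^2}(x^{-2}) = 2x^{-2}(2\tau^2 + |\mu|^2 + x f_2)$ for some bounded smooth $f_2$; in particular, on the unit level set and for $x$ sufficiently small, $\frac{d^2}{dt^2}(x^{-2}) \geq c\, x^{-2}$ for some $c > 0$. -/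
/-!
The derivative formulas are a direct computation, with
`f₂ = 3 τ f₁ + x f₁² - g₁ - f₁'`. The real point is that `f₂` is bounded although `x` is not
assumed bounded, i.e. that `x f₁²` is bounded. For `y = x⁻¹` one has `y' = -τ y - f₁` with
`(τ y)² ≤ y² + C y`. If `f₁(t₀)² ≫ y(t₀)`, then `f₁ ≥ f₁(t₀)/2` on an interval of length
`≳ f₁(t₀) / Lip f₁`, on which `τ y` is negligible, so `y` would decrease by more than `y(t₀)`
and become negative. With `f₂` bounded, the unit level set gives
`2τ² + μ² + x f₂ ≥ 1 - O(x) ≥ 1/2` for small `x`.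
-/

open Set
open scoped NNReal

theorem neg_sub_lt_of_sq_le_sq_add_mul {w f y C K δ : ℝ} (hK : 0 < K) (hC : 8 * C ≤ K)
    (hδ : 0 < δ) (hδK : 4 * δ ≤ K) (hy : 0 ≤ y) (hyδ : y ≤ δ ^ 2 / K)
    (hw : w ^ 2 ≤ y ^ 2 + C * y) (hf : δ ≤ f) : -w - f < -(δ / 4) := by
  have hyδ' : y ≤ δ / 4 := by
    have : δ ^ 2 / K ≤ δ / 4 := by
      rw [div_le_div_iff₀ hK (by norm_num)]; nlinarith
    linarith
  have hCy : C * y ≤ δ ^ 2 / 8 := by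
    rcases le_or_gt C 0 with hC0 | hC0
    · nlinarith [sq_nonneg δ]
    · calc C * y ≤ C * (δ ^ 2 / K) := by gcongr
        _ ≤ δ ^ 2 / 8 := by
          rw [mul_div_assoc', div_le_div_iff₀ hK (by norm_num)]; nlinarith [sq_nonneg δ]
  have hw' : |w| < δ / 2 := abs_lt_of_sq_lt_sq (by nlinarith) (by positivity)
  linarith [neg_abs_le w]

theorem sq_le_mul_of_hasDerivAt_of_pos {y w f : ℝ → ℝ} {C K : ℝ} {L : ℝ≥0}
    (hy : ∀ t, 0 < y t) (hy' : ∀ t, HasDerivAt y (-w t - f t) t)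
    (hw : ∀ t, w t ^ 2 ≤ y t ^ 2 + C * y t) (hf : LipschitzWith L f)
    (hK : 0 < K) (hC : 8 * C ≤ K) (hL : 4 * L ≤ K) {t₀ : ℝ} (hft₀ : 0 < f t₀)
    (hfK : 2 * f t₀ ≤ K) : f t₀ ^ 2 ≤ 4 * K * y t₀ := by
  by_contra! hsmall
  set δ := f t₀ / 2 with hδ
  have hδ0 : 0 < δ := half_pos hft₀
  have hyδ : y t₀ < δ ^ 2 / K := by
    rw [lt_div_iff₀ hK, hδ]; linarith
  set T := t₀ + 4 * δ / K with hT
  have hfδ : ∀ t ∈ Icc t₀ T, δ ≤ f t := by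
    intro t ⟨ht₀, htT⟩
    have hlip := hf.le_add_mul t₀ t
    rw [Real.dist_eq, abs_sub_comm, abs_of_nonneg (sub_nonneg.2 ht₀)] at hlip
    have : (L : ℝ) * (t - t₀) ≤ δ := by
      calc (L : ℝ) * (t - t₀) ≤ (K / 4) * (4 * δ / K) := by
            gcongr <;> linarith
        _ = δ := by field_simp
    linarith
  have hslope : ∀ t ∈ Icc t₀ T, y t ≤ y t₀ → -w t - f t < -(δ / 4) := fun t ht hyt =>
    neg_sub_lt_of_sq_le_sq_add_mul hK hC hδ0 (by linarith) (hy t).le (by linarith) (hw t)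
      (hfδ t ht)
  have hdecay : ∀ t ∈ Icc t₀ T, y t ≤ y t₀ - δ / 4 * (t - t₀) := by
    refine image_le_of_deriv_right_lt_deriv_boundary' (f' := fun t => -w t - f t)
      (fun t _ => (hy' t).continuousAt.continuousWithinAt)
      (fun t _ => (hy' t).hasDerivWithinAt) (by simp) (by fun_prop)
      (fun t _ => ?_) (fun t ht hyt => hslope t (Ico_subset_Icc_self ht) ?_)
    · simpa using ((((hasDerivAt_id t).sub_const t₀).const_mul (δ / 4)).const_sub
        (y t₀)).hasDerivWithinAt
    · rw [hyt]; nlinarith [ht.1]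
  have hT₀ : t₀ ≤ T := by rw [hT]; linarith [div_pos (mul_pos four_pos hδ0) hK]
  have hyT := hdecay T ⟨hT₀, le_rfl⟩
  have : δ / 4 * (T - t₀) = δ ^ 2 / K := by rw [hT]; field_simp; ring
  linarith [hy T]

theorem sq_le_mul_of_hasDerivAt {y w f : ℝ → ℝ} {C K : ℝ} {L : ℝ≥0}
    (hy : ∀ t, 0 < y t) (hy' : ∀ t, HasDerivAt y (-w t - f t) t)
    (hw : ∀ t, w t ^ 2 ≤ y t ^ 2 + C * y t) (hf : LipschitzWith L f)
    (hK : 0 < K) (hC : 8 * C ≤ K) (hL : 4 * L ≤ K) (hfK : ∀ t, 2 * |f t| ≤ K) (t : ℝ) :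
    f t ^ 2 ≤ 4 * K * y t := by
  rcases lt_trichotomy (f t) 0 with hneg | hzero | hpos
  · -- Reversing time turns `y' = -w - f` into `y' = w + f`, which has the same shape.
    have hrev := sq_le_mul_of_hasDerivAt_of_pos (y := fun s => y (-s)) (w := fun s => -w (-s))
      (f := fun s => -f (-s)) (fun s => hy (-s))
      (fun s => ((hy' (-s)).comp s (hasDerivAt_neg s)).congr_deriv (by ring))
      (fun s => by simpa using hw (-s))
      (by rw [← mul_one L]; exact (hf.comp (isometry_neg (G := ℝ)).lipschitz).neg) hK hC hL
      (t₀ := -t) (by simpa using hneg) (by simp only [neg_neg]; linarith [hfK t, neg_abs_le (f t)])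
    simpa using hrev
  · rw [hzero]; nlinarith [hy t]
  · exact sq_le_mul_of_hasDerivAt_of_pos hy hy' hw hf hK hC hL hpos
      (by linarith [hfK t, le_abs_self (f t)])

theorem hasDerivAt_inv_of_hasDerivAt {x : ℝ → ℝ} {τ f t : ℝ}
    (hx : HasDerivAt x (τ * x t + x t ^ 2 * f) t) (h0 : x t ≠ 0) :
    HasDerivAt (fun s => (x s)⁻¹) (-(τ * (x t)⁻¹) - f) t :=
  (hx.inv h0).congr_deriv (by field_simp; ring)

theorem hasDerivAt_inv_sq_of_hasDerivAt {x : ℝ → ℝ} {τ f t : ℝ}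
    (hx : HasDerivAt x (τ * x t + x t ^ 2 * f) t) (h0 : x t ≠ 0) :
    HasDerivAt (fun s => (x s)⁻¹ ^ 2) (-2 * (x t)⁻¹ ^ 2 * (τ + x t * f)) t :=
  ((hasDerivAt_inv_of_hasDerivAt hx h0).pow 2).congr_deriv (by norm_num; field_simp; ring)

theorem mul_sq_le_of_hasDerivAt {x τ f : ℝ → ℝ} {C K : ℝ} {L : ℝ≥0} (hx : ∀ t, 0 < x t)
    (hx' : ∀ t, HasDerivAt x (τ t * x t + x t ^ 2 * f t) t) (hτ : ∀ t, τ t ^ 2 ≤ 1 + C * x t)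
    (hf : LipschitzWith L f) (hK : 0 < K) (hC : 8 * C ≤ K) (hL : 4 * L ≤ K)
    (hfK : ∀ t, 2 * |f t| ≤ K) (t : ℝ) : x t * f t ^ 2 ≤ 4 * K := by
  have hsq := sq_le_mul_of_hasDerivAt (y := fun s => (x s)⁻¹) (w := fun s => τ s * (x s)⁻¹)
    (fun s => inv_pos.2 (hx s)) (fun s => hasDerivAt_inv_of_hasDerivAt (hx' s) (hx s).ne')
    (fun s => ?_) hf hK hC hL hfK t
  · calc x t * f t ^ 2 ≤ x t * (4 * K * (x t)⁻¹) := by gcongr; exact (hx t).le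
      _ = 4 * K := by field_simp [(hx t).ne']
  · calc (τ s * (x s)⁻¹) ^ 2 = τ s ^ 2 * (x s)⁻¹ ^ 2 := by ring
      _ ≤ (1 + C * x s) * (x s)⁻¹ ^ 2 := by gcongr; exact hτ s
      _ = (x s)⁻¹ ^ 2 + C * (x s)⁻¹ := by field_simp [(hx s).ne']

theorem hasDerivAt_deriv_inv_sq {x τ μ f g : ℝ → ℝ} {f' t : ℝ} (hx : ∀ s, x s ≠ 0)
    (hx' : ∀ s, HasDerivAt x (τ s * x s + x s ^ 2 * f s) s)
    (hτ' : HasDerivAt τ (-μ t ^ 2 + x t * g t) t) (hf' : HasDerivAt f f' t) :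
    HasDerivAt (deriv fun s => (x s)⁻¹ ^ 2) (2 * (x t)⁻¹ ^ 2 *
      (2 * τ t ^ 2 + μ t ^ 2 + x t * (3 * τ t * f t + x t * f t ^ 2 - g t - f'))) t := by
  have hderiv : (deriv fun s => (x s)⁻¹ ^ 2) = fun s => -2 * (x s)⁻¹ ^ 2 * (τ s + x s * f s) :=
    funext fun s => (hasDerivAt_inv_sq_of_hasDerivAt (hx' s) (hx s)).deriv
  rw [hderiv]
  exact (((hasDerivAt_inv_sq_of_hasDerivAt (hx' t) (hx t)).const_mul (-2)).mul
    (hτ'.add ((hx' t).mul hf'))).congr_deriv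
    (by simp only [Pi.add_apply, Pi.mul_apply]; field_simp; ring)

theorem abs_remainder_le {x τ f g f' B C K Bg L : ℝ} (hx : 0 ≤ x) (hC : 0 ≤ C)
    (hτ : τ ^ 2 ≤ 1 + C * x) (hf : |f| ≤ B) (hxf : x * f ^ 2 ≤ K) (hg : |g| ≤ Bg)
    (hf' : |f'| ≤ L) : |3 * τ * f + x * f ^ 2 - g - f'| ≤ 3 * √(B ^ 2 + C * K) + K + Bg + L := by
  have hfB : f ^ 2 ≤ B ^ 2 := sq_le_sq' (abs_le.1 hf).1 (abs_le.1 hf).2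
  have hτf : |τ * f| ≤ √(B ^ 2 + C * K) := Real.abs_le_sqrt <| by
    calc (τ * f) ^ 2 = τ ^ 2 * f ^ 2 := by ring
      _ ≤ (1 + C * x) * f ^ 2 := by gcongr
      _ = f ^ 2 + C * (x * f ^ 2) := by ring
      _ ≤ B ^ 2 + C * K := by gcongr
  have hxf0 : 0 ≤ x * f ^ 2 := by positivity
  rw [abs_le] at hτf hg hf' ⊢
  constructor <;> nlinarith

theorem half_le_two_mul_sq_add_sq_add_mul {x τ μ r C B : ℝ} (hx : 0 ≤ x)
    (hunit : |τ ^ 2 + μ ^ 2 - 1| ≤ C * x) (hr : |r| ≤ B) (hsmall : (C + B) * x ≤ 1 / 2) :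
    1 / 2 ≤ 2 * τ ^ 2 + μ ^ 2 + x * r := by
  have hxr : -(B * x) ≤ x * r := by nlinarith [(abs_le.1 hr).1]
  nlinarith [(abs_le.1 hunit).1, sq_nonneg τ]

/-- Strict convexity of `x⁻²` along geodesics near infinity: if along integral curves
`dx/dt = τx + x²f₁`, `dτ/dt = -|μ|² + xg₁` with `f₁, g₁` bounded, and
`τ² + |μ|² = 1 + O(x)`, then `d(x⁻²)/dt = -2x⁻²(τ + xf₁)` and
`d²(x⁻²)/dt² = 2x⁻²(2τ² + |μ|² + xf₂)` for some bounded `f₂`; in particular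
`d²(x⁻²)/dt² ≥ c x⁻²` for `x` sufficiently small. -/
theorem stmt18 (x τ μ f1 g1 : ℝ → ℝ)
    (hxpos : ∀ t, 0 < x t)
    (hxd : Differentiable ℝ x) (hτd : Differentiable ℝ τ) (hf1d : Differentiable ℝ f1)
    (hf1b : ∃ B : ℝ, ∀ t, |f1 t| ≤ B) (hf1db : ∃ B : ℝ, ∀ t, |deriv f1 t| ≤ B)
    (hg1b : ∃ B : ℝ, ∀ t, |g1 t| ≤ B)
    (hx' : ∀ t, deriv x t = τ t * x t + (x t) ^ 2 * f1 t)
    (hτ' : ∀ t, deriv τ t = -(μ t) ^ 2 + x t * g1 t)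
    (hunit : ∃ Cu : ℝ, ∀ t, |(τ t) ^ 2 + (μ t) ^ 2 - 1| ≤ Cu * x t) :
    (∀ t, deriv (fun s => (x s)⁻¹ ^ 2) t = -2 * (x t)⁻¹ ^ 2 * (τ t + x t * f1 t))
    ∧ ∃ f2 : ℝ → ℝ, (∃ B : ℝ, ∀ t, |f2 t| ≤ B)
        ∧ (∀ t, deriv (deriv (fun s => (x s)⁻¹ ^ 2)) t
              = 2 * (x t)⁻¹ ^ 2 * (2 * (τ t) ^ 2 + (μ t) ^ 2 + x t * f2 t))
        ∧ ∃ c x0 : ℝ, 0 < c ∧ 0 < x0 ∧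
            ∀ t, x t < x0 →
              c * (x t)⁻¹ ^ 2 ≤ deriv (deriv (fun s => (x s)⁻¹ ^ 2)) t := by
  obtain ⟨B, hB⟩ := hf1b
  obtain ⟨L, hL⟩ := hf1db
  obtain ⟨Bg, hBg⟩ := hg1b
  obtain ⟨C, hC⟩ := hunit
  have hB0 : 0 ≤ B := (abs_nonneg _).trans (hB 0)
  have hL0 : 0 ≤ L := (abs_nonneg _).trans (hL 0)
  have hC0 : 0 ≤ C := nonneg_of_mul_nonneg_left ((abs_nonneg _).trans (hC 0)) (hxpos 0)
  have hxODE : ∀ t, HasDerivAt x (τ t * x t + x t ^ 2 * f1 t) t := fun t =>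
    hx' t ▸ (hxd t).hasDerivAt
  have hτC : ∀ t, τ t ^ 2 ≤ 1 + C * x t := fun t => by
    linarith [(abs_le.1 (hC t)).2, sq_nonneg (μ t)]
  have hLip : LipschitzWith L.toNNReal f1 := lipschitzWith_of_nnnorm_deriv_le hf1d fun t => by
    rw [← NNReal.coe_le_coe, coe_nnnorm, Real.coe_toNNReal _ hL0, Real.norm_eq_abs]; exact hL t
  set K := 4 * L + 8 * C + 2 * B + 1
  have hxf : ∀ t, x t * f1 t ^ 2 ≤ 4 * K := mul_sq_le_of_hasDerivAt hxpos hxODE hτC hLip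
    (by positivity) (by linarith) (by rw [Real.coe_toNNReal _ hL0]; linarith)
    (fun t => by linarith [hB t])
  set B2 := 3 * √(B ^ 2 + C * (4 * K)) + 4 * K + Bg + L
  have hf2 : ∀ t, |3 * τ t * f1 t + x t * f1 t ^ 2 - g1 t - deriv f1 t| ≤ B2 := fun t =>
    abs_remainder_le (hxpos t).le hC0 (hτC t) (hB t) (hxf t) (hBg t) (hL t)
  have hd2 : ∀ t, deriv (deriv (fun s => (x s)⁻¹ ^ 2)) t = 2 * (x t)⁻¹ ^ 2 * (2 * τ t ^ 2 +
      μ t ^ 2 + x t * (3 * τ t * f1 t + x t * f1 t ^ 2 - g1 t - deriv f1 t)) := fun t =>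
    (hasDerivAt_deriv_inv_sq (fun s => (hxpos s).ne') hxODE (hτ' t ▸ (hτd t).hasDerivAt)
      (hf1d t).hasDerivAt).deriv
  have hCB2 : 0 < C + B2 + 1 := by linarith [(abs_nonneg _).trans (hf2 0)]
  refine ⟨fun t => (hasDerivAt_inv_sq_of_hasDerivAt (hxODE t) (hxpos t).ne').deriv, _,
    ⟨B2, hf2⟩, hd2, 1, (2 * (C + B2 + 1))⁻¹, one_pos, by positivity, fun t ht => ?_⟩
  have hsmall : (C + B2 + 1) * x t ≤ 1 / 2 :=
    calc (C + B2 + 1) * x t ≤ (C + B2 + 1) * (2 * (C + B2 + 1))⁻¹ := by gcongr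
      _ = 1 / 2 := by field_simp
  have hhalf := half_le_two_mul_sq_add_sq_add_mul (hxpos t).le (hC t) (hf2 t)
    (by linarith [hxpos t])
  rw [hd2]
  nlinarith [pow_pos (inv_pos.2 (hxpos t)) 2]
end

section
/- Suppose along integral curves $\frac{dx}{dt} = \tau x + x^2 f_1$ with $\frac{d\tau}{dt} = -|\mu|^2 + x g_1$ where $f_1, g_1$ are smooth bounded functions, and $\tau^2 + |\mu|^2 = 1$ on the characteristic set. Then $\frac{d^2x}{dt^2} = (1 - 2|\mu|^2)x + x^2 f_2$ for some bounded smooth $f_2$. In particular, if $|\mu| > 3/4$ and $x$ is sufficiently small, then $\frac{d^2x}{dt^2} \leq -c\, x$ for some $c > 0$; hence at any critical point of $x$ along such a curve ($\frac{dx}{dt} = 0$, so $\tau = O(x)$), $x$ has a strict local maximum. -/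
/-!
Differentiating `x' = τx + x²f₁` and substituting `τ' = -|μ|² + xg₁` and `τ² = 1 - |μ|²` gives
`x'' = (1 - 2|μ|²)x + x²f₂` with `f₂ = g₁ + 3τf₁ + f₁' + 2xf₁²`. As `x` is not assumed bounded,
the substance is the bound on `xf₁²`. The function `y = 1/x` solves the linear equation
`y' = -τy - f₁` with `|τ| ≤ 1`; on a window of length `δ ≍ min(|f₁(t)|/‖f₁'‖, 1)` around `t` the
forcing `f₁` keeps the sign of `f₁(t)` and size `≥ |f₁(t)|/2`, and comparison with `e^{±s}` shows
that `y` stays positive on that window only if `y(t) ≳ |f₁(t)| δ`. This yields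
`x f₁² ≤ 4(2‖f₁'‖ + ‖f₁‖)`. For `|μ| > 3/4` and small `x` one then gets `x'' ≤ -x/16 < 0`, and
the second derivative test makes every critical point of `x` a strict local maximum.
-/

open Real Set

theorem mul_one_sub_exp_le_of_deriv_le_sub {y : ℝ → ℝ} {a b k : ℝ} (hy : Differentiable ℝ y)
    (hab : a ≤ b) (hyb : 0 < y b) (hderiv : ∀ s ∈ Ioo a b, deriv y s ≤ y s - k) :
    k * (1 - exp (a - b)) ≤ y a := by
  set G := fun s => exp (-s) * (y s - k)
  have hG : ∀ s, HasDerivAt G (exp (-s) * (deriv y s - (y s - k))) s := fun s =>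
    ((hasDerivAt_neg s).exp.fun_mul ((hy s).hasDerivAt.sub_const k)).congr_deriv (by ring)
  have hGd : Differentiable ℝ G := fun s => (hG s).differentiableAt
  have hGanti : AntitoneOn G (Icc a b) := by
    refine antitoneOn_of_deriv_nonpos (convex_Icc a b) hGd.continuous.continuousOn
      hGd.differentiableOn fun s hs => ?_
    rw [interior_Icc] at hs
    rw [(hG s).deriv]
    exact mul_nonpos_of_nonneg_of_nonpos (exp_pos _).le (by linarith [hderiv s hs])
  have hGab : exp (-b) * (y b - k) ≤ exp (-a) * (y a - k) :=
    hGanti (left_mem_Icc.2 hab) (right_mem_Icc.2 hab) hab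
  have hscaled : exp (a - b) * (y b - k) ≤ y a - k := by
    have h := mul_le_mul_of_nonneg_left hGab (exp_pos a).le
    rwa [← mul_assoc, ← mul_assoc, ← exp_add, ← exp_add, add_neg_cancel, exp_zero, one_mul,
      ← sub_eq_add_neg] at h
  nlinarith [mul_pos (exp_pos (a - b)) hyb]

theorem mul_one_sub_exp_le_of_sub_le_deriv {y : ℝ → ℝ} {a b k : ℝ} (hy : Differentiable ℝ y)
    (hab : a ≤ b) (hya : 0 < y a) (hderiv : ∀ s ∈ Ioo a b, k - y s ≤ deriv y s) :
    k * (1 - exp (a - b)) ≤ y b := by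
  have h := mul_one_sub_exp_le_of_deriv_le_sub (y := fun s => y (-s)) (a := -b) (b := -a) (k := k)
    (hy.comp differentiable_neg) (neg_le_neg hab) (by simpa using hya) fun s hs => by
      rw [deriv_comp_neg]
      linarith [hderiv (-s) ⟨by linarith [hs.2], by linarith [hs.1]⟩]
  simpa [neg_add_eq_sub] using h

theorem half_le_one_sub_exp_neg {δ : ℝ} (h0 : 0 ≤ δ) (h1 : δ ≤ 1) : δ / 2 ≤ 1 - exp (-δ) := by
  have hexp : exp (-δ) * exp δ = 1 := by rw [← exp_add, neg_add_cancel, exp_zero]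
  nlinarith [add_one_le_exp δ, exp_pos (-δ)]

theorem hasDerivAt_inv_of_riccati {x : ℝ → ℝ} {t τ f : ℝ} (hxd : DifferentiableAt ℝ x t)
    (hx : x t ≠ 0) (hx' : deriv x t = τ * x t + x t ^ 2 * f) :
    HasDerivAt (fun s => (x s)⁻¹) (-τ * (x t)⁻¹ - f) t := by
  refine (hxd.hasDerivAt.inv hx).congr_deriv ?_
  rw [hx']
  field_simp
  ring

theorem half_abs_mul_one_sub_exp_le_inv {x τ f : ℝ → ℝ} (hx : ∀ t, 0 < x t)
    (hxd : Differentiable ℝ x) (hτ : ∀ t, |τ t| ≤ 1)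
    (hx' : ∀ t, deriv x t = τ t * x t + x t ^ 2 * f t) {t δ : ℝ} (hδ : 0 ≤ δ)
    (hf : ∀ s, |s - t| ≤ δ → |f s - f t| ≤ |f t| / 2) :
    |f t| / 2 * (1 - exp (-δ)) ≤ (x t)⁻¹ := by
  set y := fun s => (x s)⁻¹
  have hy' : ∀ s, deriv y s = -τ s * y s - f s := fun s =>
    (hasDerivAt_inv_of_riccati (hxd s) (hx s).ne' (hx' s)).deriv
  have hyd : Differentiable ℝ y := fun s =>
    (hasDerivAt_inv_of_riccati (hxd s) (hx s).ne' (hx' s)).differentiableAt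
  have hy : ∀ s, 0 < y s := fun s => inv_pos.2 (hx s)
  have hτy : ∀ s, |τ s * y s| ≤ y s := fun s => by
    rw [abs_mul, abs_of_pos (hy s)]
    exact mul_le_of_le_one_left (hy s).le (hτ s)
  rcases le_total 0 (f t) with hft | hft
  · have h := mul_one_sub_exp_le_of_deriv_le_sub (a := t) (b := t + δ) (k := |f t| / 2) hyd
      (by linarith) (hy _) fun s hs => by
        have hfs := abs_le.1 (hf s (abs_le.2 ⟨by linarith [hs.1], by linarith [hs.2]⟩))
        rw [hy', abs_of_nonneg hft] at *
        linarith [abs_le.1 (hτy s)]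
    simpa using h
  · have h := mul_one_sub_exp_le_of_sub_le_deriv (a := t - δ) (b := t) (k := |f t| / 2) hyd
      (by linarith) (hy _) fun s hs => by
        have hfs := abs_le.1 (hf s (abs_le.2 ⟨by linarith [hs.1], by linarith [hs.2]⟩))
        rw [hy', abs_of_nonpos hft] at *
        linarith [abs_le.1 (hτy s)]
    simpa using h

theorem mul_sq_le_of_riccati {x τ f : ℝ → ℝ} {B B' : ℝ} (hx : ∀ t, 0 < x t)
    (hxd : Differentiable ℝ x) (hfd : Differentiable ℝ f) (hτ : ∀ t, |τ t| ≤ 1)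
    (hfB : ∀ t, |f t| ≤ B) (hf'B : ∀ t, |deriv f t| ≤ B')
    (hx' : ∀ t, deriv x t = τ t * x t + x t ^ 2 * f t) (t : ℝ) :
    x t * f t ^ 2 ≤ 4 * (2 * B' + B) := by
  have hB' : 0 ≤ B' := (abs_nonneg _).trans (hf'B t)
  rw [← sq_abs]
  rcases (abs_nonneg (f t)).eq_or_lt with hm | hm
  · rw [← hm]
    linarith [(abs_nonneg _).trans (hfB t)]
  set m := |f t|
  set δ := m / (2 * B' + m)
  have hδ : 0 < δ := by positivity
  have hmδ : m * δ * (2 * B' + m) = m ^ 2 := by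
    simp only [δ]
    field_simp
  have hB'δ : B' * δ ≤ m / 2 := by nlinarith
  have hlip : ∀ s, |s - t| ≤ δ → |f s - f t| ≤ m / 2 := fun s hs => by
    have h := convex_univ.norm_image_sub_le_of_norm_deriv_le (fun u _ => hfd u)
      (fun u _ => hf'B u) (mem_univ t) (mem_univ s)
    simp only [Real.norm_eq_abs] at h
    nlinarith
  have hlow := half_abs_mul_one_sub_exp_le_inv hx hxd hτ hx' hδ.le hlip
  have hexp := half_le_one_sub_exp_neg hδ.le (div_le_one_of_le₀ (by linarith) (by positivity))
  have hxmδ : x t * (m * δ) ≤ 4 := by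
    have hinv : m / 2 * (δ / 2) ≤ (x t)⁻¹ := hlow.trans' (by gcongr)
    have h := mul_le_mul_of_nonneg_left hinv (hx t).le
    rw [mul_inv_cancel₀ (hx t).ne'] at h
    linarith
  nlinarith [hfB t, hx t]

theorem exists_pos_forall_lt_of_deriv_deriv_neg {f : ℝ → ℝ} {t : ℝ} (hf : Continuous f)
    (hd : deriv f t = 0) (hdd : deriv (deriv f) t < 0) :
    ∃ δ : ℝ, 0 < δ ∧ ∀ s, s ≠ t → |s - t| < δ → f s < f t := by
  obtain ⟨δ, hδ, hsign⟩ :=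
    Metric.eventually_nhds_iff.1 (eventually_nhdsWithin_sign_eq_of_deriv_neg hdd hd)
  have hnear : ∀ {u}, |u - t| < δ → SignType.sign (deriv f u) = SignType.sign (t - u) :=
    fun hu => hsign (by rwa [Real.dist_eq])
  refine ⟨δ, hδ, fun s hst hs => ?_⟩
  rcases hst.lt_or_gt with hlt | hgt
  · refine strictMonoOn_of_deriv_pos (convex_Icc s t) hf.continuousOn (fun u hu => ?_)
      (left_mem_Icc.2 hlt.le) (right_mem_Icc.2 hlt.le) hlt
    rw [interior_Icc] at hu
    rw [← sign_eq_one_iff,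
      hnear (abs_lt.2 ⟨by linarith [abs_lt.1 hs, hu.1], by linarith [hu.2]⟩), sign_eq_one_iff,
      sub_pos]
    exact hu.2
  · refine strictAntiOn_of_deriv_neg (convex_Icc t s) hf.continuousOn (fun u hu => ?_)
      (left_mem_Icc.2 hgt.le) (right_mem_Icc.2 hgt.le) hgt
    rw [interior_Icc] at hu
    rw [← sign_eq_neg_one_iff,
      hnear (abs_lt.2 ⟨by linarith [hu.1], by linarith [abs_lt.1 hs, hu.2]⟩), sign_eq_neg_one_iff,
      sub_neg]
    exact hu.1

/-- The coefficient `f₂` of `x²` in `d²x/dt²`. -/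
noncomputable def secondOrderCoeff (x τ f1 g1 : ℝ → ℝ) (t : ℝ) : ℝ :=
  g1 t + 3 * τ t * f1 t + deriv f1 t + 2 * x t * f1 t ^ 2

theorem deriv_deriv_eq_secondOrderCoeff {x τ μ f1 g1 : ℝ → ℝ} (hxd : Differentiable ℝ x)
    (hτd : Differentiable ℝ τ) (hf1d : Differentiable ℝ f1)
    (hx' : ∀ t, deriv x t = τ t * x t + x t ^ 2 * f1 t)
    (hτ' : ∀ t, deriv τ t = -μ t ^ 2 + x t * g1 t) (hchar : ∀ t, τ t ^ 2 + μ t ^ 2 = 1) (t : ℝ) :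
    deriv (deriv x) t = (1 - 2 * μ t ^ 2) * x t + x t ^ 2 * secondOrderCoeff x τ f1 g1 t := by
  have hder : HasDerivAt (fun s => τ s * x s + x s ^ 2 * f1 s)
      (deriv τ t * x t + τ t * deriv x t + (2 * x t ^ 1 * deriv x t * f1 t + x t ^ 2 * deriv f1 t))
      t :=
    ((hτd t).hasDerivAt.mul (hxd t).hasDerivAt).add
      (((hxd t).hasDerivAt.pow 2).mul (hf1d t).hasDerivAt)
  rw [funext hx', hder.deriv, hτ', hx', secondOrderCoeff]
  linear_combination x t * hchar t

theorem abs_secondOrderCoeff_le {x τ f1 g1 : ℝ → ℝ} {B B' G : ℝ} (hx : ∀ t, 0 < x t)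
    (hxd : Differentiable ℝ x) (hf1d : Differentiable ℝ f1) (hτ : ∀ t, |τ t| ≤ 1)
    (hf1B : ∀ t, |f1 t| ≤ B) (hf1'B : ∀ t, |deriv f1 t| ≤ B') (hg1G : ∀ t, |g1 t| ≤ G)
    (hx' : ∀ t, deriv x t = τ t * x t + x t ^ 2 * f1 t) (t : ℝ) :
    |secondOrderCoeff x τ f1 g1 t| ≤ G + 11 * B + 17 * B' := by
  have hxf := mul_sq_le_of_riccati hx hxd hf1d hτ hf1B hf1'B hx' t
  have hxf0 : 0 ≤ x t * f1 t ^ 2 := mul_nonneg (hx t).le (sq_nonneg _)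
  have hτf : |τ t * f1 t| ≤ B := by
    rw [abs_mul]
    exact (mul_le_of_le_one_left (abs_nonneg _) (hτ t)).trans (hf1B t)
  rw [secondOrderCoeff, abs_le]
  constructor <;> linarith [abs_le.1 (hg1G t), abs_le.1 hτf, abs_le.1 (hf1'B t)]

theorem one_sub_two_mul_sq_mul_add_sq_mul_le {x μ f M : ℝ} (hx : 0 < x) (hμ : 3 / 4 < |μ|)
    (hf : |f| ≤ M) (hxM : x * M ≤ 1 / 16) :
    (1 - 2 * μ ^ 2) * x + x ^ 2 * f ≤ -(1 / 16) * x := by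
  have hμ2 : 9 / 16 < μ ^ 2 := by nlinarith [sq_abs μ, abs_nonneg μ]
  nlinarith [mul_le_mul_of_nonneg_left (abs_le.1 hf).2 (sq_nonneg x)]

/-- Concavity of the level sets of `x` near infinity: if along integral curves
`dx/dt = τx + x²f₁`, `dτ/dt = -|μ|² + xg₁`, and `τ² + |μ|² = 1`, then
`d²x/dt² = (1 - 2|μ|²)x + x²f₂` with `f₂` bounded; in particular if `|μ| > 3/4` and
`x` is small then `d²x/dt² ≤ -cx`, so at any critical point of `x` (where `τ = O(x)`,
indeed `τ = -xf₁`), `x` has a strict local maximum. -/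
theorem stmt19 (x τ μ f1 g1 : ℝ → ℝ)
    (hxpos : ∀ t, 0 < x t)
    (hxsm : ContDiff ℝ 2 x) (hτd : Differentiable ℝ τ) (hf1d : Differentiable ℝ f1)
    (hf1b : ∃ B : ℝ, ∀ t, |f1 t| ≤ B) (hf1db : ∃ B : ℝ, ∀ t, |deriv f1 t| ≤ B)
    (hg1b : ∃ B : ℝ, ∀ t, |g1 t| ≤ B)
    (hx' : ∀ t, deriv x t = τ t * x t + (x t) ^ 2 * f1 t)
    (hτ' : ∀ t, deriv τ t = -(μ t) ^ 2 + x t * g1 t)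
    (hchar : ∀ t, (τ t) ^ 2 + (μ t) ^ 2 = 1) :
    (∃ f2 : ℝ → ℝ, (∃ B : ℝ, ∀ t, |f2 t| ≤ B)
        ∧ ∀ t, deriv (deriv x) t = (1 - 2 * (μ t) ^ 2) * x t + (x t) ^ 2 * f2 t)
    ∧ (∃ c x0 : ℝ, 0 < c ∧ 0 < x0 ∧
        ∀ t, 3 / 4 < |μ t| → x t < x0 →
          deriv (deriv x) t ≤ -c * x t
          ∧ (deriv x t = 0 → τ t = -(x t) * f1 t)
          ∧ (deriv x t = 0 → ∃ δ : ℝ, 0 < δ ∧ ∀ s, s ≠ t → |s - t| < δ → x s < x t)) := by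
  obtain ⟨B, hB⟩ := hf1b
  obtain ⟨B', hB'⟩ := hf1db
  obtain ⟨G, hG⟩ := hg1b
  have hxd : Differentiable ℝ x := hxsm.differentiable two_ne_zero
  have hτ : ∀ t, |τ t| ≤ 1 := fun t =>
    (sq_le_one_iff_abs_le_one _).1 (by nlinarith [hchar t, sq_nonneg (μ t)])
  set M := G + 11 * B + 17 * B'
  have hf2 : ∀ t, |secondOrderCoeff x τ f1 g1 t| ≤ M :=
    abs_secondOrderCoeff_le hxpos hxd hf1d hτ hB hB' hG hx'
  have hM : 0 ≤ M := (abs_nonneg _).trans (hf2 0)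
  have hx'' := deriv_deriv_eq_secondOrderCoeff hxd hτd hf1d hx' hτ' hchar
  refine ⟨⟨_, ⟨M, hf2⟩, hx''⟩,
    1 / 16, 1 / (16 * (M + 1)), by norm_num, by positivity, fun t hμ hxt => ?_⟩
  have hxM : x t * M ≤ 1 / 16 := by
    rw [lt_div_iff₀ (by positivity)] at hxt
    nlinarith [hxpos t]
  have hconcave : deriv (deriv x) t ≤ -(1 / 16) * x t := by
    rw [hx'']
    exact one_sub_two_mul_sq_mul_add_sq_mul_le (hxpos t) hμ (hf2 t) hxM
  refine ⟨hconcave, fun hcrit => ?_, fun hcrit => exists_pos_forall_lt_of_deriv_deriv_neg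
    hxd.continuous hcrit (hconcave.trans_lt (by linarith [hxpos t]))⟩
  have h : (τ t + x t * f1 t) * x t = 0 := by rw [← hcrit, hx']; ring
  linarith [(mul_eq_zero.1 h).resolve_right (hxpos t).ne']
end
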